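/- Scenario-independence of optimal routing (Proposition 1, Consistency). Let ŷ₁ and ŷ₂ be demand scenarios and let u be a delivery plan. Assume: (a) (z₁, u) is feasible for scenario ŷ₁ and C(ŷ₁, z₁, u) ≤ C(ŷ₁, z, u) for every routing plan z such that (z, u) is feasible for ŷ₁; and (b) there exists some routing plan z₂ such that (z₂, u) is feasible for scenario ŷ₂. Then (z₁, u) is feasible for scenario ŷ₂ and C(ŷ₂, z₁, u) ≤ C(ŷ₂, z, u) for every routing plan z such that (z, u) is feasible for ŷ₂. In words: consistency of the delivery variables u among all scenarios is sufficient for consistency of the (optimal) routing variables z. -/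
import Mathlib


open Finset

/-- Inventory levels `Î(y,u)` determined by the recursion
`Î(0,i) = I0 i` and `Î(t+1,i) = Î(t,i) + Σ_v u(i,v,t) − y(i,t)`. -/
noncomputable def inventory {N V : Type*} [Fintype V]
    (I0 : N → ℝ) (y : N → ℕ → ℝ) (u : N → V → ℕ → ℝ) : ℕ → N → ℝ
  | 0 => I0
  | t + 1 => fun i => inventory I0 y u t i + (∑ v : V, u i v t) - y i t

/-- Feasibility of a solution `(z, u)` for the demand scenario `y` over the
periods `T = {0, …, ℓ−1}`.  The warehouse is `none : Option N` and the
retailers are `some i`; edges are ordered pairs of distinct nodes. -/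
def Feasible {N V : Type*} [Fintype N] [DecidableEq N] [Fintype V]
    (ℓ : ℕ) (Q Imax M : ℝ) (I0 : N → ℝ) (y : N → ℕ → ℝ)
    (z : Option N → Option N → V → ℕ → ℝ) (u : N → V → ℕ → ℝ) : Prop :=
  -- routing variables are binary
  (∀ i j v t, z i j v t = 0 ∨ z i j v t = 1) ∧
  -- delivery quantities are nonnegative
  (∀ i v t, 0 ≤ u i v t) ∧
  -- (i) each vehicle leaves and returns to the warehouse exactly once per period
  (∀ v t, t < ℓ →
    (∑ j ∈ univ.erase (none : Option N), z none j v t) = 1 ∧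
    (∑ j ∈ univ.erase (none : Option N), z j none v t) = 1) ∧
  -- (ii) flow conservation at each retailer
  (∀ (i : N) (v : V) (t : ℕ), t < ℓ →
    (∑ j ∈ univ.erase (some i), z (some i) j v t)
      = ∑ j ∈ univ.erase (some i), z j (some i) v t) ∧
  -- (iii) each retailer is visited at most once per period
  (∀ (i : N) (t : ℕ), t < ℓ →
    (∑ v : V, ∑ j ∈ univ.erase (some i), z (some i) j v t) ≤ 1) ∧
  -- (iv) big-M linking of deliveries and visits
  (∀ (i : N) (v : V) (t : ℕ), t < ℓ →
    u i v t ≤ M * ∑ j ∈ univ.erase (some i), z (some i) j v t) ∧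
  -- (v) vehicle capacity
  (∀ (v : V) (t : ℕ), t < ℓ → (∑ i : N, u i v t) ≤ Q) ∧
  -- (vi) inventory capacity
  (∀ (i : N) (v : V) (t : ℕ), t < ℓ → u i v t ≤ Imax - inventory I0 y u t i) ∧
  -- (vii) subtour elimination
  (∀ (v : V) (t : ℕ), t < ℓ → ∀ S : Finset N, 2 ≤ S.card →
    (∑ i ∈ S, ∑ j ∈ S.erase i, z (some i) (some j) v t) ≤ (S.card : ℝ) - 1)

/-- Cost `C(y, z, u)` of a solution under scenario `y`: transportation cost
plus holding and backorder costs. -/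
noncomputable def cost {N V : Type*} [Fintype N] [DecidableEq N] [Fintype V]
    (ℓ : ℕ) (c : Option N → Option N → ℝ) (h e : ℝ) (I0 : N → ℝ)
    (y : N → ℕ → ℝ)
    (z : Option N → Option N → V → ℕ → ℝ) (u : N → V → ℕ → ℝ) : ℝ :=
  (∑ t ∈ Finset.range ℓ, ∑ i : Option N, ∑ j ∈ univ.erase i, ∑ v : V, c i j * z i j v t)
    + ∑ t ∈ Finset.range ℓ, ∑ i : N,
        (h * max (inventory I0 y u (t + 1) i) 0
          + e * max (-(inventory I0 y u (t + 1) i)) 0)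

/-- **Proposition 1 (Consistency): scenario-independence of optimal routing.**
If `(z₁, u)` is feasible for scenario `y₁` and its cost under `y₁` is minimal among
all routing plans `z` with `(z, u)` feasible for `y₁`, and if some routing plan `z₂`
makes `(z₂, u)` feasible for scenario `y₂`, then `(z₁, u)` is feasible for `y₂` and
its cost under `y₂` is minimal among all routing plans `z` with `(z, u)` feasible
for `y₂`. -/
theorem scenario_independence_of_optimal_routing
    {N V : Type*} [Fintype N] [DecidableEq N] [Fintype V] [Nonempty N] [Nonempty V]
    (ℓ : ℕ) (hℓ : 1 ≤ ℓ)
    (c : Option N → Option N → ℝ) (hc : ∀ i j, i ≠ j → 0 ≤ c i j)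
    (Q Imax h e M : ℝ) (hQ : 0 ≤ Q) (hh : 0 ≤ h) (he : 0 ≤ e) (hM : 0 ≤ M)
    (I0 : N → ℝ)
    (y₁ y₂ : N → ℕ → ℝ)
    (hy₁ : ∀ i t, t < ℓ → 0 ≤ y₁ i t) (hy₂ : ∀ i t, t < ℓ → 0 ≤ y₂ i t)
    (z₁ : Option N → Option N → V → ℕ → ℝ) (u : N → V → ℕ → ℝ)
    (hfeas₁ : Feasible ℓ Q Imax M I0 y₁ z₁ u)
    (hopt₁ : ∀ z : Option N → Option N → V → ℕ → ℝ,
      Feasible ℓ Q Imax M I0 y₁ z u →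
        cost ℓ c h e I0 y₁ z₁ u ≤ cost ℓ c h e I0 y₁ z u)
    (hfeas₂ : ∃ z₂ : Option N → Option N → V → ℕ → ℝ,
      Feasible ℓ Q Imax M I0 y₂ z₂ u) :
    Feasible ℓ Q Imax M I0 y₂ z₁ u ∧
      ∀ z : Option N → Option N → V → ℕ → ℝ,
        Feasible ℓ Q Imax M I0 y₂ z u →
          cost ℓ c h e I0 y₂ z₁ u ≤ cost ℓ c h e I0 y₂ z u := by
  obtain ⟨z₂, hz₂⟩ := hfeas₂
  -- swapping the scenario preserves feasibility, since only constraint (vi)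
  -- depends on the scenario, and it does not depend on z
  have swap : ∀ (y y' : N → ℕ → ℝ) (z z' : Option N → Option N → V → ℕ → ℝ),
      Feasible ℓ Q Imax M I0 y z u → Feasible ℓ Q Imax M I0 y' z' u →
      Feasible ℓ Q Imax M I0 y' z u := by
    intro y y' z z' hf hf'
    obtain ⟨a1, a2, a3, a4, a5, a6, a7, _, a9⟩ := hf
    obtain ⟨_, _, _, _, _, _, _, b8, _⟩ := hf'
    exact ⟨a1, a2, a3, a4, a5, a6, a7, b8, a9⟩
  have key : ∀ z : Option N → Option N → V → ℕ → ℝ,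
      cost ℓ c h e I0 y₂ z₁ u - cost ℓ c h e I0 y₂ z u
        = cost ℓ c h e I0 y₁ z₁ u - cost ℓ c h e I0 y₁ z u := by
    intro z; simp only [cost]; ring
  refine ⟨swap y₁ y₂ z₁ z₂ hfeas₁ hz₂, fun z hz => ?_⟩
  have hz1 : Feasible ℓ Q Imax M I0 y₁ z u := swap y₂ y₁ z z₁ hz hfeas₁
  have := hopt₁ z hz1
  have hk := key z
  linarith
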